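/- Dual of the Bayes problem (Example 1 of Table I, instance of Theorem 1): given positive semidefinite Hermitian matrices W m (m ∈ Fin R) with R ≥ 1, the infimum over POVMs Π (with R outcomes) of ∑_{m<R} Re(Tr(W m * Π m)) equals the supremum of Re(Tr X) over Hermitian matrices X such that W m - X is positive semidefinite for every m ∈ Fin R. -/

import Mathlib

/-!
Weak duality: for a POVM `P` and a feasible `X`,
`∑ₘ Re tr (Wₘ Pₘ) - Re tr X = ∑ₘ Re tr ((Wₘ - X) Pₘ) ≥ 0`,
since the trace of a product of positive semidefinite matrices has nonnegative real part.

Strong duality: the cone `{(∑ₘ Pₘ, ∑ₘ Re tr (Wₘ Pₘ)) | Pₘ ≥ 0}` is closed, because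
`0 ≤ Pₘ ≤ ∑ₘ Pₘ` bounds the C⋆-norm of every `Pₘ` by that of the sum. If `c` lies below the
cost of every POVM, then `(1, c)` is outside this cone, and Farkas' lemma separates it by a
functional `(Z, t) ↦ Re tr (Y Z) + γ t` that is nonnegative on the cone. Evaluating on a POVM
forces `γ > 0`, and then `X = -Y / γ` is dual feasible with `Re tr X > c`.
-/

open Matrix Complex
open scoped ComplexOrder

noncomputable section

-- The L2 operator norm makes `Matrix n n ℂ` a C⋆-algebra, so that `0 ≤ A ≤ B → ‖A‖ ≤ ‖B‖`;
-- its topology is the entrywise one.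
open scoped MatrixOrder Matrix.Norms.L2Operator

theorem csInf_eq_csSup_of_forall_le_of_forall_exists_gt {α : Type*}
    [ConditionallyCompleteLinearOrder α] {S T : Set α} (hS : S.Nonempty) (hT : T.Nonempty)
    (hle : ∀ s ∈ S, ∀ t ∈ T, t ≤ s) (hgap : ∀ c, (∀ s ∈ S, c < s) → ∃ t ∈ T, c < t) :
    sInf S = sSup T := by
  obtain ⟨s₀, hs₀⟩ := hS
  obtain ⟨t₀, ht₀⟩ := hT
  refine le_antisymm (le_of_forall_lt fun c hc => ?_)
    (le_csInf ⟨s₀, hs₀⟩ fun s hs => csSup_le ⟨t₀, ht₀⟩ fun t ht => hle s hs t ht)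
  obtain ⟨t, ht, hct⟩ := hgap c fun s hs => hc.trans_le (csInf_le ⟨t₀, (hle · · t₀ ht₀)⟩ hs)
  exact hct.trans_le (le_csSup ⟨s₀, hle s₀ hs₀⟩ ht)

theorem isClosed_image_of_isCompact_inter_preimage {X Y : Type*} [TopologicalSpace X]
    [TopologicalSpace Y] [T2Space Y] [CompactlyCoherentSpace Y] {f : X → Y} {s : Set X}
    (hf : Continuous f) (hs : ∀ K, IsCompact K → IsCompact (s ∩ f ⁻¹' K)) :
    IsClosed (f '' s) := by
  have hproper : IsProperMap (s.domRestrict f) := by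
    refine isProperMap_iff_isCompact_preimage.mpr ⟨hf.comp continuous_subtype_val, fun K hK => ?_⟩
    rw [Subtype.isCompact_iff]
    convert hs K hK using 1
    ext x
    simp [Set.domRestrict, and_comm]
  rw [← Set.range_domRestrict]
  exact hproper.isClosed_range

namespace Matrix

variable {n : Type*} [Fintype n]

theorem PosSemidef.re_trace_mul_nonneg {A B : Matrix n n ℂ} (hA : A.PosSemidef)
    (hB : B.PosSemidef) : 0 ≤ (A * B).trace.re := by
  classical
  obtain ⟨C, rfl⟩ := CStarAlgebra.nonneg_iff_eq_star_mul_self.mp hB.nonneg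
  -- `tr (A Cᴴ C) = tr (C A Cᴴ)` and `C A Cᴴ ≥ 0`
  rw [← mul_assoc, trace_mul_comm, ← mul_assoc]
  exact (Complex.nonneg_iff.mp (hA.mul_mul_conjTranspose_same C).trace_nonneg).1

theorem IsHermitian.posSemidef_of_re_trace_mul_nonneg {A : Matrix n n ℂ} (hA : A.IsHermitian)
    (h : ∀ B : Matrix n n ℂ, B.PosSemidef → 0 ≤ (A * B).trace.re) : A.PosSemidef := by
  refine posSemidef_iff_dotProduct_mulVec.mpr ⟨hA, fun v => Complex.nonneg_iff.mpr ⟨?_, ?_⟩⟩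
  · have := h _ (posSemidef_vecMulVec_self_star v)
    rwa [trace_mul_comm, vecMulVec_mul, trace_vecMulVec, dotProduct_comm,
      ← dotProduct_mulVec] at this
  · exact (hA.im_star_dotProduct_mulVec_self v).symm

theorem isClosed_setOf_posSemidef : IsClosed {A : Matrix n n ℂ | A.PosSemidef} := by
  classical
  convert isClosed_Ici (a := (0 : Matrix n n ℂ))
  exact Set.ext fun A => (nonneg_iff_posSemidef (A := A)).symm

theorem re_trace_conjTranspose_mul {Y Q : Matrix n n ℂ} (hQ : Q.IsHermitian) :
    (Yᴴ * Q).trace.re = (Y * Q).trace.re := by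
  rw [← hQ.eq, ← conjTranspose_mul, trace_conjTranspose, hQ.eq, trace_mul_comm]
  rfl

def reTraceForm : LinearMap.BilinForm ℝ (Matrix n n ℂ) :=
  (LinearMap.mul ℝ (Matrix n n ℂ)).compr₂
    (Complex.reLm ∘ₗ (traceLinearMap n ℂ ℂ).restrictScalars ℝ)

theorem reTraceForm_apply (A B : Matrix n n ℂ) : reTraceForm A B = (A * B).trace.re := rfl

theorem reTraceForm_nondegenerate : (reTraceForm (n := n)).Nondegenerate := by
  have hsymm : (reTraceForm (n := n)).IsSymm :=
    ⟨fun A B => by simp [reTraceForm_apply, trace_mul_comm A B]⟩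
  refine (LinearMap.IsRefl.nondegenerate_iff_separatingLeft hsymm.isRefl).mpr fun A hA => ?_
  have hre : (A * Aᴴ).trace.re = 0 := hA Aᴴ
  have him : (A * Aᴴ).trace.im = 0 :=
    (Complex.nonneg_iff.mp (posSemidef_self_mul_conjTranspose A).trace_nonneg).2.symm
  exact trace_mul_conjTranspose_self_eq_zero_iff.mp (Complex.ext hre him)

theorem exists_isHermitian_re_trace_mul_eq (g : Matrix n n ℂ →ₗ[ℝ] ℝ) :
    ∃ X : Matrix n n ℂ, X.IsHermitian ∧
      ∀ Q : Matrix n n ℂ, Q.IsHermitian → g Q = (X * Q).trace.re := by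
  set Y := (reTraceForm.toDual reTraceForm_nondegenerate).symm g
  have hY (M : Matrix n n ℂ) : g M = (Y * M).trace.re := by
    rw [← reTraceForm_apply, ← LinearMap.BilinForm.toDual_def reTraceForm_nondegenerate,
      LinearEquiv.apply_symm_apply]
  refine ⟨realPart Y, (realPart Y).2, fun Q hQ => ?_⟩
  rw [realPart_apply_coe, smul_mul_assoc, add_mul, trace_smul, trace_add]
  simp only [hY, star_eq_conjTranspose, re_trace_conjTranspose_mul hQ, Complex.real_smul,
    Complex.re_ofReal_mul, Complex.add_re]
  ring

end Matrix

section Bayes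

variable {ι n : Type*}

theorem posSemidef_pi_single [DecidableEq ι] {m : ι} {Q : Matrix n n ℂ} (hQ : Q.PosSemidef)
    (i : ι) : ((Pi.single m Q : ι → Matrix n n ℂ) i).PosSemidef := by
  rcases eq_or_ne i m with rfl | hi
  · simpa using hQ
  · simpa [hi] using PosSemidef.zero

variable [Fintype ι]

def IsPOVM [DecidableEq n] (P : ι → Matrix n n ℂ) : Prop :=
  (∀ m, (P m).PosSemidef) ∧ ∑ m, P m = 1

theorem isPOVM_single [DecidableEq ι] [DecidableEq n] (i : ι) :
    IsPOVM (Pi.single i (1 : Matrix n n ℂ)) :=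
  ⟨posSemidef_pi_single PosSemidef.one, by simp⟩

variable [Fintype n]

def bayesCost (W P : ι → Matrix n n ℂ) : ℝ := ∑ m, (W m * P m).trace.re

theorem re_trace_le_bayesCost [DecidableEq n] {W P : ι → Matrix n n ℂ} {X : Matrix n n ℂ}
    (hP : IsPOVM P) (hX : ∀ m, (W m - X).PosSemidef) : X.trace.re ≤ bayesCost W P := by
  have hgap : ∑ m, ((W m - X) * P m).trace.re = bayesCost W P - X.trace.re :=
    calc ∑ m, ((W m - X) * P m).trace.re
        = ∑ m, ((W m * P m).trace.re - (X * P m).trace.re) := by simp [sub_mul]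
      _ = bayesCost W P - (X * ∑ m, P m).trace.re := by
        rw [Finset.sum_sub_distrib, Finset.mul_sum, trace_sum, Complex.re_sum, bayesCost]
      _ = bayesCost W P - X.trace.re := by rw [hP.2, mul_one]
  linarith [Finset.sum_nonneg fun m (_ : m ∈ Finset.univ) => (hX m).re_trace_mul_nonneg (hP.1 m)]

def bayesMap (W : ι → Matrix n n ℂ) : (ι → Matrix n n ℂ) →ₗ[ℝ] Matrix n n ℂ × ℝ where
  toFun P := (∑ m, P m, bayesCost W P)
  map_add' P Q := by simp [bayesCost, mul_add, Finset.sum_add_distrib]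
  map_smul' c P := by simp [bayesCost, Finset.smul_sum, Finset.mul_sum]

theorem isCompact_posSemidef_inter_preimage_bayesMap [DecidableEq n] (W : ι → Matrix n n ℂ)
    {K : Set (Matrix n n ℂ × ℝ)} (hK : IsCompact K) :
    IsCompact ({P | ∀ m, (P m).PosSemidef} ∩ bayesMap W ⁻¹' K) := by
  refine Metric.isCompact_of_isClosed_isBounded ?_ ?_
  · refine IsClosed.inter ?_ (hK.isClosed.preimage (bayesMap W).continuous_of_finiteDimensional)
    rw [Set.ofPred_forall]
    exact isClosed_iInter fun m =>
      isClosed_setOf_posSemidef.preimage (continuous_apply (A := fun _ : ι => Matrix n n ℂ) m)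
  · obtain ⟨r, hr, hKr⟩ := hK.isBounded.exists_pos_norm_le
    refine isBounded_iff_forall_norm_le.mpr ⟨r, fun P ⟨hP, hPK⟩ => ?_⟩
    refine (pi_norm_le_iff_of_nonneg hr.le).mpr fun m => ?_
    have hle : P m ≤ ∑ i, P i :=
      Finset.single_le_sum (fun i _ => (hP i).nonneg) (Finset.mem_univ m)
    calc ‖P m‖ ≤ ‖∑ i, P i‖ := CStarAlgebra.norm_le_norm_of_nonneg_of_le (hP m).nonneg hle
      _ ≤ ‖bayesMap W P‖ := norm_fst_le (bayesMap W P)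
      _ ≤ r := hKr _ hPK

variable [DecidableEq n]

def bayesCone (W : ι → Matrix n n ℂ) : ProperCone ℝ (Matrix n n ℂ × ℝ) where
  carrier := bayesMap W '' {P | ∀ m, (P m).PosSemidef}
  add_mem' := by
    rintro _ _ ⟨P, hP, rfl⟩ ⟨Q, hQ, rfl⟩
    exact ⟨P + Q, fun m => (hP m).add (hQ m), map_add _ P Q⟩
  zero_mem' := ⟨0, fun _ => PosSemidef.zero, map_zero _⟩
  smul_mem' := by
    rintro c _ ⟨P, hP, rfl⟩
    exact ⟨(c : ℝ) • P, fun m => (hP m).smul c.2, map_smul _ (c : ℝ) P⟩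
  isClosed' := isClosed_image_of_isCompact_inter_preimage
    (bayesMap W).continuous_of_finiteDimensional
    fun _ => isCompact_posSemidef_inter_preimage_bayesMap W

theorem mem_bayesCone {W : ι → Matrix n n ℂ} {y : Matrix n n ℂ × ℝ} :
    y ∈ bayesCone W ↔ ∃ P, (∀ m, (P m).PosSemidef) ∧ (∑ m, P m, bayesCost W P) = y :=
  Iff.rfl

theorem one_mem_bayesCone_iff {W : ι → Matrix n n ℂ} {c : ℝ} :
    ((1 : Matrix n n ℂ), c) ∈ bayesCone W ↔ ∃ P, IsPOVM P ∧ bayesCost W P = c := by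
  simp [mem_bayesCone, IsPOVM, and_assoc]

theorem single_mem_bayesCone [DecidableEq ι] (W : ι → Matrix n n ℂ) (m : ι) {Q : Matrix n n ℂ}
    (hQ : Q.PosSemidef) : (Q, (W m * Q).trace.re) ∈ bayesCone W :=
  ⟨Pi.single m Q, posSemidef_pi_single hQ,
    by simp [bayesMap, bayesCost, Pi.single_apply, apply_ite, Finset.sum_ite_eq']⟩

theorem exists_separating_of_lt_bayesCost [Nonempty ι] {W : ι → Matrix n n ℂ} {c : ℝ}
    (hc : ∀ P, IsPOVM P → c < bayesCost W P) :
    ∃ Y : Matrix n n ℂ, Y.IsHermitian ∧ ∃ γ : ℝ, 0 < γ ∧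
      (∀ m Q, Q.PosSemidef → 0 ≤ (Y * Q).trace.re + (W m * Q).trace.re * γ) ∧
      Y.trace.re + c * γ < 0 := by
  classical
  have hout : ((1 : Matrix n n ℂ), c) ∉ bayesCone W := fun h => by
    obtain ⟨P, hP, hPc⟩ := one_mem_bayesCone_iff.mp h
    exact (hc P hP).ne' hPc
  obtain ⟨f, hf, hfc⟩ := (bayesCone W).hyperplane_separation_point hout
  have hf_apply (Z : Matrix n n ℂ) (t : ℝ) : f (Z, t) = f (Z, 0) + t * f (0, 1) := by
    rw [← smul_eq_mul, ← map_smul, ← map_add]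
    simp
  obtain ⟨Y, hY, hfY⟩ :=
    exists_isHermitian_re_trace_mul_eq (f.toLinearMap ∘ₗ LinearMap.inl ℝ (Matrix n n ℂ) ℝ)
  simp only [LinearMap.coe_comp, Function.comp_apply, LinearMap.inl_apply,
    ContinuousLinearMap.coe_coe] at hfY
  rw [hf_apply, hfY 1 isHermitian_one, mul_one] at hfc
  refine ⟨Y, hY, f (0, 1), ?_, fun m Q hQ => ?_, hfc⟩
  · obtain i := Classical.arbitrary ι
    have hcost := hc _ (isPOVM_single (n := n) i)
    have hf₁ := hf _ (one_mem_bayesCone_iff.mpr ⟨_, isPOVM_single i, rfl⟩)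
    rw [hf_apply, hfY 1 isHermitian_one, mul_one] at hf₁
    exact pos_of_mul_pos_right (a := bayesCost W (Pi.single i 1) - c) (by linarith) (by linarith)
  · have hfQ := hf _ (single_mem_bayesCone W m hQ)
    rwa [hf_apply, hfY Q hQ.1] at hfQ

theorem exists_dual_feasible_of_lt_bayesCost [Nonempty ι] {W : ι → Matrix n n ℂ}
    (hW : ∀ m, (W m).IsHermitian) {c : ℝ} (hc : ∀ P, IsPOVM P → c < bayesCost W P) :
    ∃ X : Matrix n n ℂ, X.IsHermitian ∧ (∀ m, (W m - X).PosSemidef) ∧ c < X.trace.re := by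
  obtain ⟨Y, hY, γ, hγ, hWY, hcY⟩ := exists_separating_of_lt_bayesCost hc
  have hX : (-γ⁻¹ • Y).IsHermitian := (IsSelfAdjoint.all _).smul hY
  have hre (A : Matrix n n ℂ) : (-γ⁻¹ • Y * A).trace.re = -γ⁻¹ * (Y * A).trace.re := by
    rw [smul_mul_assoc, trace_smul, Complex.real_smul, Complex.re_ofReal_mul]
  refine ⟨-γ⁻¹ • Y, hX, fun m => ?_, ?_⟩
  · refine ((hW m).sub hX).posSemidef_of_re_trace_mul_nonneg fun Q hQ => ?_
    have hscaled : (W m * Q).trace.re - -γ⁻¹ * (Y * Q).trace.re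
        = γ⁻¹ * ((Y * Q).trace.re + (W m * Q).trace.re * γ) := by
      field_simp
      ring
    rw [sub_mul, trace_sub, Complex.sub_re, hre, hscaled]
    exact mul_nonneg (inv_nonneg.mpr hγ.le) (hWY m Q hQ)
  · rw [← mul_one (-γ⁻¹ • Y), hre, mul_one, neg_mul, ← div_eq_inv_mul, lt_neg, div_lt_iff₀ hγ]
    linarith

end Bayes

theorem bayes_dual_general
    {n : Type*} [Fintype n] [DecidableEq n]
    {R : ℕ} (hR : 1 ≤ R)
    (W : Fin R → Matrix n n ℂ) (hW : ∀ m, (W m).PosSemidef) :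
    sInf ((fun P : Fin R → Matrix n n ℂ => ∑ m, ((W m * P m).trace).re) ''
        {P | (∀ m, (P m).PosSemidef) ∧ ∑ m, P m = 1}) =
      sSup ((fun X : Matrix n n ℂ => X.trace.re) ''
        {X | X.IsHermitian ∧ ∀ m, (W m - X).PosSemidef}) := by
  have : Nonempty (Fin R) := ⟨⟨0, hR⟩⟩
  refine csInf_eq_csSup_of_forall_le_of_forall_exists_gt
    ⟨_, _, isPOVM_single ⟨0, hR⟩, rfl⟩
    ⟨_, 0, ⟨isHermitian_zero, fun m => by simpa using hW m⟩, rfl⟩ ?_ fun c hc => ?_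
  · rintro _ ⟨P, hP, rfl⟩ _ ⟨X, ⟨-, hX⟩, rfl⟩
    exact re_trace_le_bayesCost hP hX
  · obtain ⟨X, hXh, hXW, hcX⟩ :=
      exists_dual_feasible_of_lt_bayesCost (fun m => (hW m).1) fun P hP => hc _ ⟨P, hP, rfl⟩
    exact ⟨_, ⟨X, ⟨hXh, hXW⟩, rfl⟩, hcX⟩

/-- Dual of the Bayes problem: the minimum average Bayes cost over POVMs equals the
maximum of `Re(Tr X)` over Hermitian `X` with `W m - X` positive semidefinite. -/
theorem bayes_dual
    {n : Type*} [Fintype n] [DecidableEq n] [Nonempty n]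
    {R : ℕ} (hR : 1 ≤ R)
    (W : Fin R → Matrix n n ℂ) (hW : ∀ m, (W m).PosSemidef) :
    sInf ((fun P : Fin R → Matrix n n ℂ => ∑ m, ((W m * P m).trace).re) ''
        {P | (∀ m, (P m).PosSemidef) ∧ ∑ m, P m = 1}) =
      sSup ((fun X : Matrix n n ℂ => X.trace.re) ''
        {X | X.IsHermitian ∧ ∀ m, (W m - X).PosSemidef}) :=
  bayes_dual_general hR W hW
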